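/- Let T be a finite tree rooted at c₀ with a path c₀, c₁, …, c_l of distinct vertices (so d_T(c₀,c_l) = l). For the general monomer-dimer model, the inequality 1_{l≥1} · Z_{T_{c₁} − T_{c_l}} · Z_T ≥ Z_{T_{c₁}} · Z_{T − T_{c_l}} holds if l is odd, and the reversed inequality ≤ holds if l is even. Here T_v denotes the subtree of v and its descendants, and T − T_{c_l} is T with the subtree T_{c_l} removed. -/

import Mathlib

/-!
Write `A i` for the vertex set of the subtree `T_{c_i}` and `B = A l`. The edge `c_i c_{i+1}` is
the only edge between `A i \ A (i+1)` and `A (i+1)`, so the Heilmann–Lieb recursion at `c_i`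
together with factorization over components gives, for `B ⊆ A (i+1)`,
`Z(A i \ B) = Z(A i \ A (i+1)) Z(A (i+1) \ B) + w Z(A i \ A (i+1) - c_i) Z(A (i+1) \ B - c_{i+1})`.
Using this at `c_0` and `c_1`, the cross difference `Z(A 1 \ B) Z(A 0) - Z(A 1) Z(A 0 \ B)` is a
negative multiple of the same difference for the path `c_1, …, c_l`, and for `l = 1` it equals
`w Z(A 0 \ A 1 - c_0) Z(A 1 - c_1) > 0`. Hence its sign is `(-1)^(l+1)`.
-/

open Finset
open scoped Classical

/-- The set of matchings (dimeric configurations) of `G` using only vertices of `S`. -/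
noncomputable def matchingsOn {V : Type*} (G : SimpleGraph V) (S : Finset V) :
    Finset (Finset (Sym2 V)) :=
  S.sym2.powerset.filter fun D =>
    (∀ e ∈ D, e ∈ G.edgeSet) ∧
      (D : Set (Sym2 V)).Pairwise fun e f => ∀ v, v ∈ e → v ∉ f

/-- General monomer-dimer partition function with vertex weights `x` and edge
weights `w`:  `Z_G = Σ_D (Π_{e∈D} w_e)(Π_{v uncovered} x_v)`. -/
noncomputable def Zgen {V : Type*} (G : SimpleGraph V) (S : Finset V)
    (x : V → ℝ) (w : Sym2 V → ℝ) : ℝ :=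
  ∑ D ∈ matchingsOn G S,
    (∏ e ∈ D, w e) * ∏ v ∈ S.filter (fun v => ∀ e ∈ D, v ∉ e), x v

/-- The set of descendants of `v` in the tree `T` rooted at `root` (vertices whose
geodesic from the root passes through `v`), i.e. the vertex set of the subtree `T_v`. -/
noncomputable def descFinset {V : Type*} [Fintype V] (T : SimpleGraph V)
    (root v : V) : Finset V :=
  Finset.univ.filter fun u => T.dist root u = T.dist root v + T.dist v u


section Matchings

variable {V : Type*} {G : SimpleGraph V} {S S₁ S₂ : Finset V}
  {x : V → ℝ} {w : Sym2 V → ℝ} {u v v' : V}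

lemma mem_matchingsOn {D : Finset (Sym2 V)} :
    D ∈ matchingsOn G S ↔ D ⊆ S.sym2 ∧ (∀ e ∈ D, e ∈ G.edgeSet) ∧
      (D : Set (Sym2 V)).Pairwise fun e f => ∀ v, v ∈ e → v ∉ f := by
  simp [matchingsOn]

lemma mem_of_mem_matchingsOn {D : Finset (Sym2 V)} (hD : D ∈ matchingsOn G S)
    {e : Sym2 V} (he : e ∈ D) {v : V} (hv : v ∈ e) : v ∈ S :=
  Finset.mem_sym2_iff.1 ((mem_matchingsOn.1 hD).1 he) v hv

lemma Zgen_pos (hx : ∀ v, 0 < x v) (hw : ∀ e, 0 < w e) : 0 < Zgen G S x w :=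
  Finset.sum_pos (fun _ _ => mul_pos (Finset.prod_pos fun e _ => hw e)
    (Finset.prod_pos fun v _ => hx v)) ⟨∅, by simp [mem_matchingsOn]⟩

@[simp]
lemma Zgen_empty : Zgen G ∅ x w = 1 := by
  have : matchingsOn G (∅ : Finset V) = {∅} := by
    ext D
    simp only [mem_matchingsOn, Finset.sym2_empty, Finset.subset_empty, Finset.mem_singleton]
    exact ⟨fun h => h.1, by rintro rfl; simp⟩
  simp [Zgen, this]

lemma matchingsOn_erase (v : V) :
    matchingsOn G (S.erase v) = (matchingsOn G S).filter fun D => ∀ e ∈ D, v ∉ e := by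
  ext D
  simp only [Finset.mem_filter, mem_matchingsOn, Finset.subset_iff, Finset.mem_sym2_iff,
    Finset.mem_erase]
  constructor
  · rintro ⟨hS, hG, hD⟩
    exact ⟨⟨fun e he z hz => (hS he z hz).2, hG, hD⟩, fun e he hv => (hS he v hv).1 rfl⟩
  · rintro ⟨⟨hS, hG, hD⟩, hv⟩
    exact ⟨fun e he z hz => ⟨fun h => hv e he (h ▸ hz), hS he z hz⟩, hG, hD⟩

lemma mem_matchingsOn_of_subset {D D' : Finset (Sym2 V)} (hD : D ∈ matchingsOn G S)
    (h : D' ⊆ D) : D' ∈ matchingsOn G S := by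
  obtain ⟨hS, hG, hD⟩ := mem_matchingsOn.1 hD
  exact mem_matchingsOn.2 ⟨h.trans hS, fun e he => hG e (h he), hD.mono (by simpa using h)⟩

lemma insert_mem_matchingsOn {D : Finset (Sym2 V)} (hD : D ∈ matchingsOn G S) {e : Sym2 V}
    (heS : e ∈ S.sym2) (heG : e ∈ G.edgeSet) (he : ∀ f ∈ D, ∀ z ∈ e, z ∉ f) :
    insert e D ∈ matchingsOn G S := by
  obtain ⟨hS, hG, hD⟩ := mem_matchingsOn.1 hD
  refine mem_matchingsOn.2 ⟨Finset.insert_subset heS hS, by simpa [heG] using hG, ?_⟩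
  rw [Finset.coe_insert, Set.pairwise_insert]
  exact ⟨hD, fun f hf _ => ⟨he f hf, fun z hzf hze => he f hf z hze hzf⟩⟩

lemma filter_uncovered_insert (D : Finset (Sym2 V)) :
    S.filter (fun z => ∀ e ∈ insert s(v, u) D, z ∉ e) =
      ((S.erase v).erase u).filter (fun z => ∀ e ∈ D, z ∉ e) := by
  ext z
  simp only [Finset.mem_filter, Finset.mem_insert, Finset.mem_erase, forall_eq_or_imp,
    Sym2.mem_iff, not_or]
  tauto

/-- `D ↦ D.erase s(v, u)` is a bijection onto the matchings of `S - v - u`. -/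
lemma sum_matchingsOn_filter_mem (h : G.Adj v u) (hv : v ∈ S) (hu : u ∈ S) :
    ∑ D ∈ (matchingsOn G S).filter (s(v, u) ∈ ·),
        (∏ e ∈ D, w e) * ∏ z ∈ S.filter (fun z => ∀ e ∈ D, z ∉ e), x z =
      w s(v, u) * Zgen G ((S.erase v).erase u) x w := by
  have avoid : ∀ D ∈ matchingsOn G ((S.erase v).erase u), ∀ f ∈ D, ∀ z ∈ s(v, u), z ∉ f := by
    intro D hD f hf z hz hzf
    have := mem_of_mem_matchingsOn hD hf hzf
    rcases Sym2.mem_iff.1 hz with rfl | rfl <;> simp at this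
  rw [Zgen, Finset.mul_sum]
  symm
  refine Finset.sum_nbij' (insert s(v, u)) (fun D => D.erase s(v, u)) ?_ ?_ ?_ ?_ ?_
  · intro D hD
    simp only [Finset.mem_filter, Finset.mem_insert_self, and_true] at hD ⊢
    refine insert_mem_matchingsOn ?_ (Finset.mk_mem_sym2_iff.2 ⟨hv, hu⟩) h (avoid D hD)
    rw [matchingsOn_erase, matchingsOn_erase] at hD
    exact (Finset.mem_filter.1 (Finset.mem_filter.1 hD).1).1
  · intro D hD
    simp only [Finset.mem_filter] at hD ⊢
    rw [matchingsOn_erase, matchingsOn_erase]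
    have hpair := (mem_matchingsOn.1 hD.1).2.2
    have hdisj : ∀ f ∈ D.erase s(v, u), ∀ z ∈ s(v, u), z ∉ f := fun f hf =>
      hpair hD.2 (Finset.mem_of_mem_erase hf) (Finset.ne_of_mem_erase hf).symm
    simp only [Finset.mem_filter]
    exact ⟨⟨mem_matchingsOn_of_subset hD.1 (Finset.erase_subset _ _),
      fun f hf => hdisj f hf v (Sym2.mem_mk_left _ _)⟩,
      fun f hf => hdisj f hf u (Sym2.mem_mk_right _ _)⟩
  · intro D hD
    exact Finset.erase_insert fun hmem => avoid D hD _ hmem v (Sym2.mem_mk_left _ _)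
      (Sym2.mem_mk_left _ _)
  · intro D hD
    exact Finset.insert_erase (Finset.mem_filter.1 hD).2
  · intro D hD
    rw [Finset.prod_insert fun hmem => avoid D hD _ hmem v (Sym2.mem_mk_left _ _)
      (Sym2.mem_mk_left _ _), filter_uncovered_insert, mul_assoc]

lemma filter_matchingsOn_covering :
    (matchingsOn G S).filter (fun D => ¬ ∀ e ∈ D, v ∉ e) =
      (S.filter (G.Adj v)).biUnion fun u => (matchingsOn G S).filter (s(v, u) ∈ ·) := by
  ext D
  simp only [Finset.mem_filter, Finset.mem_biUnion, not_forall, not_not]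
  constructor
  · rintro ⟨hD, e, he, hve⟩
    have hedge : s(v, Sym2.Mem.other hve) = e := Sym2.other_spec hve
    refine ⟨Sym2.Mem.other hve, ⟨mem_of_mem_matchingsOn hD he (Sym2.other_mem hve), ?_⟩,
      hD, by rwa [hedge]⟩
    rw [← SimpleGraph.mem_edgeSet, hedge]
    exact (mem_matchingsOn.1 hD).2.1 e he
  · rintro ⟨u, -, hD, hu⟩
    exact ⟨hD, _, hu, Sym2.mem_mk_left _ _⟩

lemma pairwiseDisjoint_filter_matchingsOn_mem :
    (S.filter (G.Adj v) : Set V).PairwiseDisjoint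
      fun u => (matchingsOn G S).filter (s(v, u) ∈ ·) := by
  intro u₁ _ u₂ _ hne
  refine Finset.disjoint_filter.2 fun D hD h₁ h₂ => ?_
  refine (mem_matchingsOn.1 hD).2.2 h₁ h₂ ?_ v (Sym2.mem_mk_left _ _) (Sym2.mem_mk_left _ _)
  exact fun h => hne (Sym2.congr_right.1 h)

/-- The Heilmann–Lieb recursion: `v` is either a monomer or matched to a neighbour `u`. -/
lemma Zgen_eq_add_sum (hv : v ∈ S) :
    Zgen G S x w = x v * Zgen G (S.erase v) x w +
      ∑ u ∈ S.filter (G.Adj v), w s(v, u) * Zgen G ((S.erase v).erase u) x w := by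
  rw [Zgen, ← Finset.sum_filter_add_sum_filter_not _ (fun D => ∀ e ∈ D, v ∉ e)]
  congr 1
  · rw [Zgen, matchingsOn_erase, Finset.mul_sum]
    refine Finset.sum_congr rfl fun D hD => ?_
    have hvD : v ∈ S.filter (fun z => ∀ e ∈ D, z ∉ e) :=
      Finset.mem_filter.2 ⟨hv, (Finset.mem_filter.1 hD).2⟩
    rw [← Finset.mul_prod_erase _ _ hvD, ← Finset.filter_erase]
    ring
  · rw [filter_matchingsOn_covering, Finset.sum_biUnion pairwiseDisjoint_filter_matchingsOn_mem]
    refine Finset.sum_congr rfl fun u hu => ?_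
    obtain ⟨huS, hvu⟩ := Finset.mem_filter.1 hu
    exact sum_matchingsOn_filter_mem hvu hv huS

lemma Zgen_union (hd : Disjoint S₁ S₂) (hsep : ∀ a ∈ S₁, ∀ b ∈ S₂, ¬ G.Adj a b) :
    Zgen G (S₁ ∪ S₂) x w = Zgen G S₁ x w * Zgen G S₂ x w := by
  induction S₁ using Finset.strongInduction with
  | H S₁ ih =>
  rcases S₁.eq_empty_or_nonempty with rfl | ⟨v, hv⟩
  · simp
  have hv₂ : v ∉ S₂ := Finset.disjoint_left.1 hd hv
  have ih' : ∀ T ⊆ S₁.erase v, Zgen G (T ∪ S₂) x w = Zgen G T x w * Zgen G S₂ x w :=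
    fun T hT => ih T (hT.trans_ssubset (Finset.erase_ssubset hv))
      (hd.mono_left (hT.trans (Finset.erase_subset _ _)))
      fun a ha => hsep a (Finset.mem_of_mem_erase (hT ha))
  have hnbr : (S₁ ∪ S₂).filter (G.Adj v) = S₁.filter (G.Adj v) := by
    rw [Finset.filter_union, Finset.filter_false_of_mem fun b hb => hsep v hv b hb,
      Finset.union_empty]
  rw [Zgen_eq_add_sum (Finset.mem_union_left _ hv), Zgen_eq_add_sum hv, hnbr,
    Finset.erase_union_distrib, Finset.erase_eq_of_notMem hv₂, ih' _ subset_rfl, add_mul,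
    Finset.sum_mul, mul_assoc]
  congr 1
  refine Finset.sum_congr rfl fun u hu => ?_
  have hu₂ : u ∉ S₂ := fun h => hsep v hv u h (Finset.mem_filter.1 hu).2
  rw [Finset.erase_union_distrib, Finset.erase_eq_of_notMem hu₂,
    ih' _ (Finset.erase_subset _ _), mul_assoc]

/-- The bridge `vv'` is either unused or a dimer. -/
lemma Zgen_union_of_bridge (hd : Disjoint S₁ S₂) (hv : v ∈ S₁) (hv' : v' ∈ S₂)
    (hadj : G.Adj v v') (hbridge : ∀ a ∈ S₁, ∀ b ∈ S₂, G.Adj a b → a = v ∧ b = v') :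
    Zgen G (S₁ ∪ S₂) x w = Zgen G S₁ x w * Zgen G S₂ x w +
      w s(v, v') * Zgen G (S₁.erase v) x w * Zgen G (S₂.erase v') x w := by
  have hv₂ : v ∉ S₂ := Finset.disjoint_left.1 hd hv
  have hv'₁ : v' ∉ S₁ := Finset.disjoint_right.1 hd hv'
  have hsep : ∀ a ∈ S₁.erase v, ∀ b ∈ S₂, ¬ G.Adj a b := fun a ha b hb h =>
    Finset.ne_of_mem_erase ha (hbridge a (Finset.mem_of_mem_erase ha) b hb h).1
  have hd' : Disjoint (S₁.erase v) S₂ := hd.mono_left (Finset.erase_subset _ _)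
  have hnbr : (S₁ ∪ S₂).filter (G.Adj v) = insert v' (S₁.filter (G.Adj v)) := by
    have : S₂.filter (G.Adj v) = {v'} := by
      ext b
      simp only [Finset.mem_filter, Finset.mem_singleton]
      exact ⟨fun ⟨hb, h⟩ => (hbridge v hv b hb h).2, by rintro rfl; exact ⟨hv', hadj⟩⟩
    rw [Finset.filter_union, this, Finset.union_comm, ← Finset.insert_eq]
  rw [Zgen_eq_add_sum (Finset.mem_union_left _ hv), Zgen_eq_add_sum hv, hnbr,
    Finset.sum_insert fun h => hv'₁ (Finset.mem_filter.1 h).1, Finset.erase_union_distrib,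
    Finset.erase_eq_of_notMem hv₂, Zgen_union hd' hsep, Finset.erase_union_distrib,
    Finset.erase_eq_of_notMem fun h => hv'₁ (Finset.mem_of_mem_erase h),
    Zgen_union (hd'.mono_right (Finset.erase_subset _ _))
      fun a ha b hb => hsep a ha b (Finset.mem_of_mem_erase hb),
    add_mul, Finset.sum_mul]
  have hsum : ∀ u ∈ S₁.filter (G.Adj v), w s(v, u) * Zgen G ((S₁.erase v ∪ S₂).erase u) x w =
      w s(v, u) * Zgen G ((S₁.erase v).erase u) x w * Zgen G S₂ x w := by
    intro u hu
    have hu₂ : u ∉ S₂ := fun h => hv'₁ ((hbridge v hv u h (Finset.mem_filter.1 hu).2).2 ▸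
      (Finset.mem_filter.1 hu).1)
    rw [Finset.erase_union_distrib, Finset.erase_eq_of_notMem hu₂,
      Zgen_union (hd'.mono_left (Finset.erase_subset _ _))
        fun a ha => hsep a (Finset.mem_of_mem_erase ha), mul_assoc]
  rw [Finset.sum_congr rfl hsum]
  ring

end Matchings

structure IsBridgeSplit {V : Type*} (G : SimpleGraph V) (P Q : Finset V) (v v' : V) : Prop where
  subset : Q ⊆ P
  left_mem : v ∈ P
  left_notMem : v ∉ Q
  right_mem : v' ∈ Q
  adj : G.Adj v v'
  eq_of_adj : ∀ a ∈ P, a ∉ Q → ∀ b ∈ Q, G.Adj a b → a = v ∧ b = v'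

namespace IsBridgeSplit

variable {V : Type*} {G : SimpleGraph V} {P Q B : Finset V} {v v' : V}
  {x : V → ℝ} {w : Sym2 V → ℝ}

lemma Zgen_sdiff (h : IsBridgeSplit G P Q v v') (hB : B ⊆ Q) (hv' : v' ∉ B) :
    Zgen G (P \ B) x w = Zgen G (P \ Q) x w * Zgen G (Q \ B) x w +
      w s(v, v') * Zgen G ((P \ Q).erase v) x w * Zgen G ((Q \ B).erase v') x w := by
  rw [← Finset.sdiff_union_sdiff_cancel h.subset hB]
  refine Zgen_union_of_bridge (Finset.sdiff_disjoint.mono_right Finset.sdiff_subset)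
    (Finset.mem_sdiff.2 ⟨h.left_mem, h.left_notMem⟩) (Finset.mem_sdiff.2 ⟨h.right_mem, hv'⟩)
    h.adj fun a ha b hb => ?_
  obtain ⟨haP, haQ⟩ := Finset.mem_sdiff.1 ha
  exact h.eq_of_adj a haP haQ b (Finset.mem_sdiff.1 hb).1

lemma Zgen_erase_sdiff (h : IsBridgeSplit G P Q v v') (hB : B ⊆ Q) :
    Zgen G ((P \ B).erase v) x w = Zgen G ((P \ Q).erase v) x w * Zgen G (Q \ B) x w := by
  rw [← Finset.sdiff_union_sdiff_cancel h.subset hB, Finset.erase_union_distrib,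
    Finset.erase_eq_of_notMem fun hv => h.left_notMem (Finset.mem_sdiff.1 hv).1]
  refine Zgen_union ((Finset.sdiff_disjoint.mono_right Finset.sdiff_subset).mono_left
      (Finset.erase_subset _ _))
    fun a ha b hb hab => Finset.ne_of_mem_erase ha ?_
  obtain ⟨haP, haQ⟩ := Finset.mem_sdiff.1 (Finset.mem_of_mem_erase ha)
  exact (h.eq_of_adj a haP haQ b (Finset.mem_sdiff.1 hb).1 hab).1

end IsBridgeSplit

section Chain

variable {V : Type*} {G : SimpleGraph V} {x : V → ℝ} {w : Sym2 V → ℝ}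

lemma subset_of_isBridgeSplit_chain {A : ℕ → Finset V} {c : ℕ → V} {n : ℕ}
    (hchain : ∀ i < n, IsBridgeSplit G (A i) (A (i + 1)) (c i) (c (i + 1)))
    {i j : ℕ} (hij : i ≤ j) (hj : j ≤ n) : A j ⊆ A i := by
  induction j, hij using Nat.le_induction with
  | base => exact subset_rfl
  | succ j _ ih => exact (hchain j (by omega)).subset.trans (ih (by omega))

/-- Each step along the chain flips the sign: by the bridge splittings at `c 0` and `c 1`, the
cross difference for `A` is a negative multiple of the one for the chain shifted by one. -/
theorem neg_one_pow_mul_Zgen_cross_pos (hx : ∀ v, 0 < x v) (hw : ∀ e, 0 < w e)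
    {A : ℕ → Finset V} {c : ℕ → V} {n : ℕ} (hn : 1 ≤ n)
    (hchain : ∀ i < n, IsBridgeSplit G (A i) (A (i + 1)) (c i) (c (i + 1))) :
    0 < (-1) ^ (n + 1) * (Zgen G (A 1 \ A n) x w * Zgen G (A 0) x w -
      Zgen G (A 1) x w * Zgen G (A 0 \ A n) x w) := by
  induction n, hn using Nat.le_induction generalizing A c with
  | base =>
    have h0 : IsBridgeSplit G (A 0) (A 1) (c 0) (c 1) := hchain 0 one_pos
    have hA0 := h0.Zgen_sdiff (x := x) (w := w) (Finset.empty_subset _) (Finset.notMem_empty _)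
    rw [Finset.sdiff_empty, Finset.sdiff_empty] at hA0
    have key : (-1) ^ (1 + 1) * (Zgen G (A 1 \ A 1) x w * Zgen G (A 0) x w -
        Zgen G (A 1) x w * Zgen G (A 0 \ A 1) x w) =
        w s(c 0, c 1) * Zgen G ((A 0 \ A 1).erase (c 0)) x w * Zgen G ((A 1).erase (c 1)) x w := by
      rw [Finset.sdiff_self, Zgen_empty, hA0]
      ring
    rw [key]
    exact mul_pos (mul_pos (hw _) (Zgen_pos hx hw)) (Zgen_pos hx hw)
  | succ n hn ih =>
    have h0 := hchain 0 (by omega)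
    have h1 := hchain 1 (by omega)
    have hB : A (n + 1) ⊆ A 2 := subset_of_isBridgeSplit_chain hchain (by omega) le_rfl
    have ih := ih (A := fun i => A (i + 1)) (c := fun i => c (i + 1))
      fun i hi => hchain (i + 1) (by omega)
    have E0 := h0.Zgen_sdiff (x := x) (w := w) (Finset.empty_subset _) (Finset.notMem_empty _)
    have E0B := h0.Zgen_sdiff (x := x) (w := w) (hB.trans h1.subset)
      fun hc => h1.left_notMem (hB hc)
    have E1 := h1.Zgen_erase_sdiff (x := x) (w := w) (Finset.empty_subset _)
    have E1B := h1.Zgen_erase_sdiff (x := x) (w := w) hB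
    simp only [Finset.sdiff_empty, zero_add] at E0 E1 ih
    have key : (-1) ^ (n + 1 + 1) * (Zgen G (A 1 \ A (n + 1)) x w * Zgen G (A 0) x w -
        Zgen G (A 1) x w * Zgen G (A 0 \ A (n + 1)) x w) =
        w s(c 0, c 1) * Zgen G ((A 0 \ A 1).erase (c 0)) x w *
          Zgen G ((A 1 \ A 2).erase (c 1)) x w *
          ((-1) ^ (n + 1) * (Zgen G (A 2 \ A (n + 1)) x w * Zgen G (A 1) x w -
            Zgen G (A 2) x w * Zgen G (A 1 \ A (n + 1)) x w)) := by
      rw [E0, E0B, E1, E1B]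
      ring
    rw [key]
    exact mul_pos (mul_pos (mul_pos (hw _) (Zgen_pos hx hw)) (Zgen_pos hx hw)) ih

end Chain

section Tree

variable {V : Type*} {T : SimpleGraph V} {r u u' v a : V}

lemma SimpleGraph.IsTree.eq_of_adj_of_dist_add_one (hT : T.IsTree) {b : V} (ha : T.Adj a u)
    (hb : T.Adj b u) (hda : T.dist r a + 1 = T.dist r u) (hdb : T.dist r b + 1 = T.dist r u) :
    a = b := by
  obtain ⟨p, -, hp⟩ := hT.connected.exists_path_of_dist r a
  obtain ⟨q, -, hq⟩ := hT.connected.exists_path_of_dist r b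
  have hpa := (p.concat ha).isPath_of_length_eq_dist (by rw [p.length_concat, hp, hda])
  have hqb := (q.concat hb).isPath_of_length_eq_dist (by rw [q.length_concat, hq, hdb])
  exact (SimpleGraph.Walk.concat_inj ((hT.existsUnique_path r u).unique hpa hqb)).1

/-- Otherwise `p (i + 1)` would be a second parent of `p i`, besides `p (i - 1)`. -/
lemma SimpleGraph.IsTree.dist_eq_of_nonbacktracking (hT : T.IsTree) {p : ℕ → V} {l : ℕ}
    (hadj : ∀ i < l, T.Adj (p i) (p (i + 1))) (hnb : ∀ i, i + 2 ≤ l → p i ≠ p (i + 2)) :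
    ∀ i ≤ l, T.dist (p 0) (p i) = i := by
  intro i
  induction i using Nat.strong_induction_on with
  | _ i ih =>
  intro hi
  rcases i with _ | i
  · simp
  rcases hT.dist_eq_dist_add_one_of_adj (p 0) (hadj i (by omega)) with h | h
  · exfalso
    rcases i with _ | m
    · simp at h
    rw [show m + 1 + 1 = m + 2 from rfl] at h
    have hm := ih m (by omega) (by omega)
    have hm1 := ih (m + 1) (by omega) (by omega)
    exact hnb m (by omega) (hT.eq_of_adj_of_dist_add_one (r := p 0) (hadj m (by omega))
      (hadj (m + 1) (by omega)).symm (by omega) (by omega))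
  · rw [h, ih i (by omega) (by omega)]

variable [Fintype V]

@[simp]
lemma mem_descFinset : u ∈ descFinset T r v ↔ T.dist r u = T.dist r v + T.dist v u := by
  simp [descFinset]

lemma self_mem_descFinset : v ∈ descFinset T r v := by
  simp

lemma descFinset_root : descFinset T r r = Finset.univ := by
  ext
  simp

lemma descFinset_subset_of_mem (hT : T.Connected) (hu : u ∈ descFinset T r v) :
    descFinset T r u ⊆ descFinset T r v := by
  intro z hz
  rw [mem_descFinset] at *
  have := hT.dist_triangle (u := r) (v := v) (w := z)
  have := hT.dist_triangle (u := v) (v := u) (w := z)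
  omega

lemma mem_descFinset_of_adj (h : T.Adj u u') (hd : T.dist r u' = T.dist r u + 1) :
    u' ∈ descFinset T r u := by
  rw [mem_descFinset, hd, SimpleGraph.dist_eq_one_iff_adj.2 h]

/-- The geodesic from `u` back to `v` starts at the parent of `u`. -/
lemma SimpleGraph.IsTree.mem_descFinset_of_adj_of_dist_add_one (hT : T.IsTree)
    (hu : u ∈ descFinset T r v) (huv : u ≠ v) (ha : T.Adj a u)
    (hda : T.dist r a + 1 = T.dist r u) : a ∈ descFinset T r v := by
  obtain ⟨q, -, hq⟩ := hT.connected.exists_path_of_dist u v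
  have hsu := q.adj_snd (SimpleGraph.Walk.not_nil_of_ne huv)
  have hs : T.dist v q.snd + 1 ≤ T.dist v u := by
    have := SimpleGraph.dist_le q.tail
    rw [SimpleGraph.Walk.length_tail, hq] at this
    have := hT.connected.pos_dist_of_ne huv
    rw [SimpleGraph.dist_comm (u := v), SimpleGraph.dist_comm (u := v) (v := u)]
    omega
  have h₁ := hT.connected.dist_triangle (u := r) (v := v) (w := q.snd)
  have h₂ := hT.connected.dist_triangle (u := r) (v := q.snd) (w := u)
  rw [SimpleGraph.dist_eq_one_iff_adj.2 hsu.symm] at h₂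
  rw [mem_descFinset] at hu ⊢
  obtain rfl : q.snd = a := hT.eq_of_adj_of_dist_add_one hsu.symm ha (by omega) hda
  omega

lemma SimpleGraph.IsTree.isBridgeSplit_descFinset (hT : T.IsTree) (h : T.Adj u u')
    (hd : T.dist r u' = T.dist r u + 1) :
    IsBridgeSplit T (descFinset T r u) (descFinset T r u') u u' where
  subset := descFinset_subset_of_mem hT.connected (mem_descFinset_of_adj h hd)
  left_mem := self_mem_descFinset
  left_notMem := by
    rw [mem_descFinset]
    omega
  right_mem := self_mem_descFinset
  adj := h
  eq_of_adj a _ ha b hb hab := by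
    rcases hT.dist_eq_dist_add_one_of_adj r hab with hd' | hd'
    · exact absurd (descFinset_subset_of_mem hT.connected hb
        (mem_descFinset_of_adj hab.symm hd')) ha
    · obtain rfl : b = u' := by
        by_contra hne
        exact ha (hT.mem_descFinset_of_adj_of_dist_add_one hb hne hab hd'.symm)
      exact ⟨hT.eq_of_adj_of_dist_add_one hab h hd'.symm hd.symm, rfl⟩

lemma SimpleGraph.IsTree.isBridgeSplit_descFinset_of_injective (hT : T.IsTree) {l : ℕ}
    {c : Fin (l + 1) → V} (hinj : Function.Injective c)
    (hadj : ∀ i : Fin l, T.Adj (c i.castSucc) (c i.succ)) (i : ℕ) (hi : i < l) :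
    IsBridgeSplit T (descFinset T (c 0) (c (Fin.ofNat (l + 1) i)))
      (descFinset T (c 0) (c (Fin.ofNat (l + 1) (i + 1))))
      (c (Fin.ofNat (l + 1) i)) (c (Fin.ofNat (l + 1) (i + 1))) := by
  set p : ℕ → V := fun i => c (Fin.ofNat (l + 1) i)
  have hpc : ∀ i (hi : i < l + 1), p i = c ⟨i, hi⟩ := fun i hi =>
    congrArg c (Fin.ext (Nat.mod_eq_of_lt hi))
  have hadj' : ∀ i < l, T.Adj (p i) (p (i + 1)) := fun i hi => by
    rw [hpc i (by omega), hpc (i + 1) (by omega)]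
    exact hadj ⟨i, hi⟩
  have hdist := hT.dist_eq_of_nonbacktracking hadj' fun i hi h => by
    rw [hpc i (by omega), hpc (i + 2) (by omega)] at h
    simpa using hinj h
  exact hT.isBridgeSplit_descFinset (r := p 0) (hadj' i hi)
    (by rw [hdist i (by omega), hdist (i + 1) hi])

end Tree

/-- on a finite tree `T` rooted at `c 0` with a simple path
`c 0, c 1, …, c l`, the inequality
`1_{l≥1}·Z_{T_{c₁}−T_{c_l}}·Z_T ≥ Z_{T_{c₁}}·Z_{T−T_{c_l}}` holds for `l` odd,
and the reversed inequality holds for `l` even. -/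
theorem stmt_15 {V : Type*} [Fintype V] [DecidableEq V] (T : SimpleGraph V)
    (hT : T.IsTree) (x : V → ℝ) (w : Sym2 V → ℝ)
    (hx : ∀ v, 0 < x v) (hw : ∀ e, 0 < w e)
    (l : ℕ) (c : Fin (l + 1) → V) (hinj : Function.Injective c)
    (hadj : ∀ i : Fin l, T.Adj (c i.castSucc) (c i.succ)) :
    (Odd l →
        Zgen T (descFinset T (c 0) (c 1)) x w *
            Zgen T (Finset.univ \ descFinset T (c 0) (c (Fin.last l))) x w ≤
          (if 1 ≤ l then (1 : ℝ) else 0) *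
            (Zgen T (descFinset T (c 0) (c 1) \ descFinset T (c 0) (c (Fin.last l))) x w *
              Zgen T Finset.univ x w)) ∧
      (Even l →
        (if 1 ≤ l then (1 : ℝ) else 0) *
            (Zgen T (descFinset T (c 0) (c 1) \ descFinset T (c 0) (c (Fin.last l))) x w *
              Zgen T Finset.univ x w) ≤
          Zgen T (descFinset T (c 0) (c 1)) x w *
            Zgen T (Finset.univ \ descFinset T (c 0) (c (Fin.last l))) x w) := by
  -- the lemmas above are stated with the classical `DecidableEq V` of the definitions
  obtain rfl : ‹DecidableEq V› = fun a b => Classical.propDecidable (a = b) :=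
    Subsingleton.elim _ _
  rcases Nat.eq_zero_or_pos l with rfl | hl
  · refine ⟨fun h => absurd h (by decide), fun _ => ?_⟩
    rw [if_neg (by omega), zero_mul]
    exact (mul_pos (Zgen_pos hx hw) (Zgen_pos hx hw)).le
  have key := neg_one_pow_mul_Zgen_cross_pos hx hw hl
    (A := fun i => descFinset T (c 0) (c (Fin.ofNat (l + 1) i)))
    (hT.isBridgeSplit_descFinset_of_injective hinj hadj)
  have h0 : Fin.ofNat (l + 1) 0 = 0 := rfl
  have h1 : Fin.ofNat (l + 1) 1 = 1 := rfl
  have hlast : Fin.ofNat (l + 1) l = Fin.last l := Fin.ext (Nat.mod_eq_of_lt l.lt_succ_self)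
  simp only [h0, h1, hlast, descFinset_root] at key
  rw [if_pos (show 1 ≤ l from hl), one_mul]
  constructor
  · intro hodd
    rw [hodd.add_one.neg_one_pow, one_mul] at key
    linarith
  · intro heven
    rw [heven.add_one.neg_one_pow] at key
    linarith
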